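/- Fix γ > 1, set β := (γ−1)^{−1}, and fix 0 < α < β. Let (X_m)_{m∈ℤ}, the illuminated sites, Θ_k, and θ^stripe be as in the long-range model. Let δ : (0,∞) → (0,∞) satisfy lim_{ε→0} δ(ε)/ε = 0 and liminf_{ε→0} ε^{−γ} δ(ε) > 0. Then for every c > 0 and every M ≥ 1, with probability one there exists ε₀ > 0 such that for every 0 < ε < ε₀ there is a point S ∈ [−c, c] with [S − Mε, S + Mε] ⊆ [−c, c] and θ^stripe(δ(ε)^{−1} s) = 1 for every s ∈ [S − Mε, S + Mε]. -/

import Mathlib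

/-!
A lamp at `m` with `X m ≥ L` illuminates every site within distance `L` of `m`, and
`P(X₀ ≥ L) ≳ L^{-(1+α)}`. Among the first `C L^{1+β}` lamps none reaches `L` with probability
at most `exp (-c' L^{β-α})`, which is summable because `α < β`; by Borel–Cantelli, almost surely
every large `L` has such a bright lamp. At scale `ε` take `L = ⌈2Mε/δ(ε)⌉`, which tends to
infinity since `δ(ε) = o(ε)`: the lamp covers a blown-up interval of length `2Mε`, at distance
at most `C L^{1+β} δ(ε) ≲ ε^{1+β} δ(ε)^{-β}` from the origin, and this is bounded because
`δ(ε) ≳ ε^γ` and `γβ = 1 + β`; the constant `C` is chosen to make the bound `c/2`.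
-/

open MeasureTheory ProbabilityTheory Filter Topology
open scoped ENNReal

/-- The normalizing constant `Z_α = Σ_{k ≠ 0} |k|^{-(2+α)}` of the heavy-tailed law. -/
noncomputable def Zalpha (α : ℝ) : ℝ :=
  ∑' k : ℤ, if k = 0 then 0 else |(k : ℝ)| ^ (-(2 + α))

/-- A site `k ∈ ℤ` is illuminated (for the configuration `ω`) if some lamp `m`
has brightness `X m ω ≥ |m - k|`. -/
def Illuminated {Ω : Type*} (X : ℤ → Ω → ℤ) (k : ℤ) (ω : Ω) : Prop :=
  ∃ m : ℤ, |m - k| ≤ X m ω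

/-- The field `Θ_k`: equal to `1` on illuminated sites and `2` otherwise. -/
noncomputable def ThetaSite {Ω : Type*} (X : ℤ → Ω → ℤ) (k : ℤ) (ω : Ω) : ℝ :=
  haveI := Classical.propDecidable (Illuminated X k ω)
  if Illuminated X k ω then 1 else 2

/-- The random step function `θ^stripe(x) = Θ_{⌊x⌋}`. -/
noncomputable def thetaStripe {Ω : Type*} (X : ℤ → Ω → ℤ) (x : ℝ) (ω : Ω) : ℝ :=
  ThetaSite X ⌊x⌋ ω

lemma Zalpha_pos {α : ℝ} (hα : -1 < α) : 0 < Zalpha α := by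
  have hsum : Summable fun k : ℤ => |(k : ℝ)| ^ (-(2 + α)) :=
    Real.summable_abs_int_rpow (by linarith)
  have hnonneg : ∀ k : ℤ, 0 ≤ if k = 0 then (0 : ℝ) else |(k : ℝ)| ^ (-(2 + α)) := fun k => by
    split_ifs <;> positivity
  refine (hsum.of_nonneg_of_le hnonneg fun k => ?_).tsum_pos hnonneg 1 (by simp)
  split_ifs
  · positivity
  · rfl

lemma summable_exp_neg_mul_rpow {b η : ℝ} (hb : 0 < b) (hη : 0 < η) :
    Summable fun n : ℕ => Real.exp (-b * (n : ℝ) ^ η) := by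
  have hpow : Tendsto (fun n : ℕ => (n : ℝ) ^ η) atTop atTop :=
    (tendsto_rpow_atTop hη).comp tendsto_natCast_atTop_atTop
  have hsmall := ((isLittleO_exp_neg_mul_rpow_atTop hb (-2 / η)).comp_tendsto hpow).isBigO
  refine summable_of_isBigO_nat (Real.summable_nat_rpow.2 (by norm_num : (-2 : ℝ) < -1))
    (hsmall.congr_right fun n => ?_)
  rw [Function.comp_apply, ← Real.rpow_mul n.cast_nonneg, mul_div_cancel₀ _ hη.ne']

section HeavyTail

variable {Ω : Type*} [MeasurableSpace Ω] {μ : Measure Ω}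

/-- Each of the `L + 1` sites `L, …, 2L` carries mass at least `C (2L)^{-(2+α)}`. -/
lemma le_measureReal_preimage_Ici_of_law [IsFiniteMeasure μ] {Y : Ω → ℤ} (hY : Measurable Y)
    {C α : ℝ} (hC : 0 ≤ C) (hα : -2 ≤ α)
    (hlaw : ∀ k : ℤ, k ≠ 0 → μ {ω | Y ω = k} = ENNReal.ofReal (C * |(k : ℝ)| ^ (-(2 + α))))
    {L : ℕ} (hL : 1 ≤ L) :
    C * 2 ^ (-(2 + α)) * (L : ℝ) ^ (-(1 + α)) ≤ μ.real (Y ⁻¹' Set.Ici (L : ℤ)) := by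
  have hL0 : (0 : ℝ) < L := by exact_mod_cast hL
  set T := Finset.Icc (L : ℤ) (2 * L)
  have hterm : ∀ k ∈ T, C * (2 * L : ℝ) ^ (-(2 + α)) ≤ μ.real (Y ⁻¹' {k}) := fun k hk => by
    obtain ⟨hLk, hk2L⟩ := Finset.mem_Icc.1 hk
    have hk0 : (0 : ℝ) < k := by exact_mod_cast (show (0 : ℤ) < k by omega)
    have hk2L' : (k : ℝ) ≤ 2 * L := by exact_mod_cast hk2L
    rw [measureReal_def, show Y ⁻¹' {k} = {ω | Y ω = k} from rfl, hlaw k (by omega),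
      ENNReal.toReal_ofReal (by positivity), abs_of_pos hk0]
    exact mul_le_mul_of_nonneg_left (Real.rpow_le_rpow_of_nonpos hk0 hk2L' (by linarith)) hC
  have hcard : (T.card : ℝ) = L + 1 := by
    rw [Int.card_Icc, show (2 * (L : ℤ) + 1 - L).toNat = L + 1 by omega]; push_cast; rfl
  calc C * 2 ^ (-(2 + α)) * (L : ℝ) ^ (-(1 + α))
      = L * (C * (2 * L : ℝ) ^ (-(2 + α))) := by
        rw [Real.mul_rpow zero_le_two hL0.le, show -(1 + α) = 1 + -(2 + α) by ring,
          Real.rpow_add hL0, Real.rpow_one]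
        ring
    _ ≤ T.card * (C * (2 * L : ℝ) ^ (-(2 + α))) := by rw [hcard]; gcongr; linarith
    _ ≤ ∑ k ∈ T, μ.real (Y ⁻¹' {k}) := by
        rw [← nsmul_eq_mul]; exact Finset.card_nsmul_le_sum T _ _ hterm
    _ = μ.real (Y ⁻¹' T) := sum_measureReal_preimage_singleton T fun k _ => hY (by simp)
    _ ≤ μ.real (Y ⁻¹' Set.Ici (L : ℤ)) :=
        measureReal_mono (Set.preimage_mono fun k hk => (Finset.mem_Icc.1 hk).1)

end HeavyTail

section Lamps

variable {Ω : Type*} [MeasurableSpace Ω] {μ : Measure Ω} [IsProbabilityMeasure μ]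

lemma measureReal_biInter_preimage_compl_le {ι β : Type*} [MeasurableSpace β] {X : ι → Ω → β}
    (hindep : iIndepFun X μ) {i₀ : ι} (hident : ∀ i, IdentDistrib (X i) (X i₀) μ μ)
    {A : Set β} (hA : MeasurableSet A) (s : Finset ι) :
    μ.real (⋂ i ∈ s, X i ⁻¹' Aᶜ) ≤ Real.exp (-(μ.real (X i₀ ⁻¹' A) * s.card)) := by
  have hprod : μ (⋂ i ∈ s, X i ⁻¹' Aᶜ) = μ (X i₀ ⁻¹' Aᶜ) ^ s.card := by
    rw [hindep.meas_biInter fun i _ => ⟨Aᶜ, hA.compl, rfl⟩,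
      Finset.prod_congr rfl fun i _ => (hident i).measure_mem_eq hA.compl, Finset.prod_const]
  have hcompl : μ.real (X i₀ ⁻¹' Aᶜ) = 1 - μ.real (X i₀ ⁻¹' A) :=
    probReal_compl_eq_one_sub₀ ((hident i₀).aemeasurable_fst.nullMeasurableSet_preimage hA)
  rw [measureReal_def, hprod, ENNReal.toReal_pow, ← measureReal_def, hcompl, mul_comm,
    ← mul_neg, Real.exp_nat_mul]
  exact pow_le_pow_left₀ (by simp) (Real.one_sub_le_exp_neg _) _

lemma ae_eventually_exists_bright_lamp {X : ℤ → Ω → ℤ} (hindep : iIndepFun X μ)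
    (hident : ∀ m, IdentDistrib (X m) (X 0) μ μ) {a ρ κ C : ℝ} (ha : 0 < a) (hρκ : ρ < κ)
    (hC : 0 < C)
    (htail : ∀ L : ℕ, 1 ≤ L → a * (L : ℝ) ^ (-ρ) ≤ μ.real (X 0 ⁻¹' Set.Ici (L : ℤ))) :
    ∀ᵐ ω ∂μ, ∀ᶠ L : ℕ in atTop, ∃ m : ℤ, 0 ≤ m ∧ (m : ℝ) ≤ C * (L : ℝ) ^ κ ∧ (L : ℤ) ≤ X m ω := by
  set N : ℕ → ℕ := fun L => ⌊C * (L : ℝ) ^ κ⌋₊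
  set F : ℕ → Set Ω := fun L => ⋂ m ∈ Finset.Icc (0 : ℤ) (N L), X m ⁻¹' (Set.Ici (L : ℤ))ᶜ
  have hexponent : ∀ L : ℕ, a * C * (L : ℝ) ^ (κ - ρ) ≤
      μ.real (X 0 ⁻¹' Set.Ici (L : ℤ)) * (Finset.Icc (0 : ℤ) (N L)).card := by
    intro L
    rcases Nat.eq_zero_or_pos L with rfl | hL
    · rw [Nat.cast_zero, Real.zero_rpow (by linarith), mul_zero]; positivity
    have hcard : C * (L : ℝ) ^ κ ≤ (Finset.Icc (0 : ℤ) (N L)).card := by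
      rw [Int.card_Icc, show ((N L : ℤ) + 1 - 0).toNat = N L + 1 by omega]
      exact_mod_cast (Nat.lt_floor_add_one _).le
    calc a * C * (L : ℝ) ^ (κ - ρ) = a * (L : ℝ) ^ (-ρ) * (C * (L : ℝ) ^ κ) := by
          rw [sub_eq_neg_add, Real.rpow_add (by exact_mod_cast hL)]; ring
      _ ≤ _ := mul_le_mul (htail L hL) hcard (by positivity) measureReal_nonneg
  have hF : ∀ L, μ.real (F L) ≤ Real.exp (-(a * C) * (L : ℝ) ^ (κ - ρ)) := fun L =>
    (measureReal_biInter_preimage_compl_le hindep hident measurableSet_Ici _).trans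
      (Real.exp_le_exp.2 (by linarith [hexponent L]))
  have hsum : ∑' L, μ (F L) ≠ ∞ := by
    refine ne_top_of_le_ne_top
      (summable_exp_neg_mul_rpow (b := a * C) (by positivity) (sub_pos.2 hρκ)).tsum_ofReal_ne_top
      (ENNReal.tsum_le_tsum fun L => ?_)
    rw [← ofReal_measureReal]
    exact ENNReal.ofReal_le_ofReal (hF L)
  filter_upwards [ae_eventually_notMem hsum] with ω hω
  filter_upwards [hω] with L hL
  simp only [F, Set.mem_iInter, Set.mem_preimage, Set.mem_compl_iff, not_forall, not_not] at hL
  obtain ⟨m, hm, hXm⟩ := hL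
  obtain ⟨hm0, hmN⟩ := Finset.mem_Icc.1 hm
  exact ⟨m, hm0, (Int.cast_le.2 hmN).trans (Nat.floor_le (by positivity)), hXm⟩

end Lamps

section Stripes

variable {Ω : Type*} {X : ℤ → Ω → ℤ} {ω : Ω} {m L : ℤ}

lemma thetaStripe_eq_one_of_mem_Icc (hL : L ≤ X m ω) {d s : ℝ} (hd : 0 < d)
    (hs : s ∈ Set.Icc (m * d) ((m + L) * d)) : thetaStripe X (d⁻¹ * s) ω = 1 := by
  have hlo : m ≤ ⌊d⁻¹ * s⌋ := Int.le_floor.2 <| by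
    rw [inv_mul_eq_div, le_div_iff₀ hd]; exact hs.1
  have hhi : ⌊d⁻¹ * s⌋ ≤ m + L := Int.floor_le_iff.2 <| by
    rw [inv_mul_eq_div, div_lt_iff₀ hd]; push_cast; nlinarith [hs.2]
  have hlit : Illuminated X ⌊d⁻¹ * s⌋ ω :=
    ⟨m, by rw [abs_sub_comm, abs_of_nonneg (by omega)]; omega⟩
  simp only [thetaStripe, ThetaSite, if_pos hlit]

lemma exists_stripe_of_bright_lamp (hL : L ≤ X m ω) (hm : 0 ≤ m) {d r c : ℝ} (hd : 0 < d)
    (hr : 0 ≤ r) (hrL : 2 * r ≤ L * d) (hc : m * d + 2 * r ≤ c) :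
    ∃ S ∈ Set.Icc (-c) c, Set.Icc (S - r) (S + r) ⊆ Set.Icc (-c) c ∧
      ∀ s ∈ Set.Icc (S - r) (S + r), thetaStripe X (d⁻¹ * s) ω = 1 := by
  have hmd : (0 : ℝ) ≤ m * d := mul_nonneg (by exact_mod_cast hm) hd.le
  refine ⟨m * d + r, ⟨by linarith, by linarith⟩,
    fun s hs => ⟨by linarith [hs.1], by linarith [hs.2]⟩,
    fun s hs => thetaStripe_eq_one_of_mem_Icc hL hd ⟨by linarith [hs.1], by linarith [hs.2]⟩⟩

end Stripes

lemma rpow_mul_le_of_le_mul_div {γ β c₀ K ε d x : ℝ} (hβ : 0 ≤ β) (hγβ : γ * β = 1 + β)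
    (hc₀ : 0 < c₀) (hK : 0 ≤ K) (hε : 0 < ε) (hd : c₀ ≤ ε ^ (-γ) * d) (hx : 0 ≤ x)
    (hxK : x ≤ K * ε / d) : x ^ (1 + β) * d ≤ K ^ (1 + β) / c₀ ^ β := by
  have hd0 : 0 < d := pos_of_mul_pos_right (hc₀.trans_le hd) (by positivity)
  have hscale : (ε / d) ^ (1 + β) * d = (ε ^ (-γ) * d)⁻¹ ^ β := by
    rw [Real.div_rpow hε.le hd0.le, Real.rpow_add hd0, Real.rpow_one, ← hγβ, Real.rpow_mul hε.le,
      Real.rpow_neg hε.le, inv_mul_eq_div, inv_div, Real.div_rpow (by positivity) hd0.le]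
    field_simp
  calc x ^ (1 + β) * d ≤ (K * (ε / d)) ^ (1 + β) * d := by
        gcongr; rwa [← mul_div_assoc]
    _ = K ^ (1 + β) * (ε ^ (-γ) * d)⁻¹ ^ β := by
        rw [Real.mul_rpow hK (by positivity), mul_assoc, hscale]
    _ ≤ K ^ (1 + β) / c₀ ^ β := by
        rw [div_eq_mul_inv, ← Real.inv_rpow hc₀.le]
        gcongr

lemma tendsto_mul_div_atTop {δ : ℝ → ℝ} (hδpos : ∀ ε > (0 : ℝ), 0 < δ ε)
    (hδsmall : Tendsto (fun ε => δ ε / ε) (𝓝[>] (0 : ℝ)) (𝓝 0)) {K : ℝ} (hK : 0 < K) :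
    Tendsto (fun ε => K * ε / δ ε) (𝓝[>] (0 : ℝ)) atTop := by
  have hpos : Tendsto (fun ε => δ ε / ε) (𝓝[>] (0 : ℝ)) (𝓝[>] 0) :=
    tendsto_nhdsWithin_iff.2
      ⟨hδsmall, eventually_nhdsWithin_of_forall fun ε hε => div_pos (hδpos ε hε) hε⟩
  refine (hpos.inv_tendsto_nhdsGT_zero.const_mul_atTop hK).congr fun ε => ?_
  simp only [Pi.inv_apply, inv_div, mul_div_assoc]

lemma exists_stripe_of_lamp_at_scale {Ω : Type*} {X : ℤ → Ω → ℤ} {ω : Ω} {γ β c₀ c M ε d : ℝ}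
    (hβ : 0 ≤ β) (hγβ : γ * β = 1 + β) (hc₀ : 0 < c₀) (hM : 0 < M) (hε : 0 < ε) (hd : 0 < d)
    (hlow : c₀ ≤ ε ^ (-γ) * d) (hnear : 4 * M * ε ≤ c) (hfar : 1 ≤ 2 * M * ε / d)
    (hlamp : ∃ m : ℤ, 0 ≤ m ∧
      (m : ℝ) ≤ c * c₀ ^ β / (2 * (4 * M) ^ (1 + β)) * (⌈2 * M * ε / d⌉₊ : ℝ) ^ (1 + β) ∧
      (⌈2 * M * ε / d⌉₊ : ℤ) ≤ X m ω) :
    ∃ S ∈ Set.Icc (-c) c, Set.Icc (S - M * ε) (S + M * ε) ⊆ Set.Icc (-c) c ∧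
      ∀ s ∈ Set.Icc (S - M * ε) (S + M * ε), thetaStripe X (d⁻¹ * s) ω = 1 := by
  obtain ⟨m, hm0, hmC, hmL⟩ := hlamp
  have hc : 0 < c := hnear.trans_lt' (by positivity)
  set A := 2 * M * ε / d
  have hA : A ≤ ⌈A⌉₊ := Nat.le_ceil A
  refine exists_stripe_of_bright_lamp hmL hm0 hd (by positivity) ?_ ?_
  · have : A * d = 2 * M * ε := div_mul_cancel₀ _ hd.ne'
    push_cast
    nlinarith
  have hceil : (⌈A⌉₊ : ℝ) ≤ 4 * M * ε / d := by
    have h2A : 2 * A = 4 * M * ε / d := by ring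
    linarith [Nat.ceil_lt_add_one (zero_le_one.trans hfar)]
  have hlamp : (m : ℝ) * d ≤ c / 2 := calc
    (m : ℝ) * d ≤ c * c₀ ^ β / (2 * (4 * M) ^ (1 + β)) * ((⌈A⌉₊ : ℝ) ^ (1 + β) * d) := by
      rw [← mul_assoc]; exact mul_le_mul_of_nonneg_right hmC hd.le
    _ ≤ c * c₀ ^ β / (2 * (4 * M) ^ (1 + β)) * ((4 * M) ^ (1 + β) / c₀ ^ β) := by
      refine mul_le_mul_of_nonneg_left ?_ (by positivity)
      exact rpow_mul_le_of_le_mul_div hβ hγβ hc₀ (by positivity) hε hlow (by positivity) hceil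
    _ = c / 2 := by field_simp
  linarith

theorem random_stripes_general {Ω : Type*} [MeasurableSpace Ω] (μ : Measure Ω) [IsProbabilityMeasure μ]
    (γ β α : ℝ) (hγ : 1 < γ) (hβ : β = (γ - 1)⁻¹) (hα0 : 0 < α) (hαβ : α < β)
    (X : ℤ → Ω → ℤ) (hXm : ∀ m, Measurable (X m))
    (hindep : iIndepFun X μ)
    (hident : ∀ m : ℤ, IdentDistrib (X m) (X 0) μ μ)
    (hlaw : ∀ k : ℤ, k ≠ 0 →
      μ {ω | X 0 ω = k} = ENNReal.ofReal ((Zalpha α)⁻¹ * |(k : ℝ)| ^ (-(2 + α))))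
    (δ : ℝ → ℝ) (hδpos : ∀ ε > (0 : ℝ), 0 < δ ε)
    (hδsmall : Tendsto (fun ε => δ ε / ε) (𝓝[>] (0 : ℝ)) (𝓝 0))
    (hδlow : ∃ c₀ > (0 : ℝ), ∀ᶠ ε in 𝓝[>] (0 : ℝ), c₀ ≤ ε ^ (-γ) * δ ε)
    (c : ℝ) (hc : 0 < c) (M : ℝ) (hM : 1 ≤ M) :
    ∀ᵐ ω ∂μ, ∃ ε₀ > (0 : ℝ), ∀ ε : ℝ, 0 < ε → ε < ε₀ →
      ∃ S : ℝ, S ∈ Set.Icc (-c) c ∧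
        Set.Icc (S - M * ε) (S + M * ε) ⊆ Set.Icc (-c) c ∧
        ∀ s ∈ Set.Icc (S - M * ε) (S + M * ε), thetaStripe X ((δ ε)⁻¹ * s) ω = 1 := by
  obtain ⟨c₀, hc₀, hδlow⟩ := hδlow
  have hβ0 : 0 < β := hα0.trans hαβ
  have hγβ : γ * β = 1 + β := by rw [hβ]; field_simp [show γ - 1 ≠ 0 by linarith]; ring
  have hM0 : 0 < M := by linarith
  have hZ : 0 < (Zalpha α)⁻¹ := inv_pos.2 (Zalpha_pos (by linarith))
  have hlamps := ae_eventually_exists_bright_lamp hindep hident (by positivity)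
    (show 1 + α < 1 + β by linarith) (C := c * c₀ ^ β / (2 * (4 * M) ^ (1 + β))) (by positivity)
    fun L hL => le_measureReal_preimage_Ici_of_law (hXm 0) hZ.le (by linarith) hlaw hL
  filter_upwards [hlamps] with ω hω
  obtain ⟨L₀, hL₀⟩ := eventually_atTop.1 hω
  have hfar : ∀ᶠ ε in 𝓝[>] (0 : ℝ), max (L₀ : ℝ) 1 ≤ 2 * M * ε / δ ε :=
    (tendsto_mul_div_atTop hδpos hδsmall (by positivity)).eventually_ge_atTop _
  have hnear : ∀ᶠ ε in 𝓝[>] (0 : ℝ), ε ≤ c / (4 * M) :=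
    nhdsWithin_le_nhds (eventually_le_nhds (by positivity))
  obtain ⟨ε₀, hε₀, hsub⟩ := mem_nhdsGT_iff_exists_Ioo_subset.1 (hfar.and (hδlow.and hnear))
  refine ⟨ε₀, hε₀, fun ε hε hεε₀ => ?_⟩
  obtain ⟨hεfar, hεlow, hεnear⟩ := hsub ⟨hε, hεε₀⟩
  exact exists_stripe_of_lamp_at_scale hβ0.le hγβ hc₀ hM0 hε (hδpos ε hε) hεlow
    (by rwa [le_div_iff₀' (by positivity)] at hεnear) ((le_max_right _ _).trans hεfar)
    (hL₀ _ (by exact_mod_cast (le_max_left _ _).trans (hεfar.trans (Nat.le_ceil _))))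

/-- **Proposition 6.1 (random stripes).** Fix `γ > 1`, `β = (γ-1)⁻¹` and `0 < α < β`.
If the microscopic scale `δ(ε)` satisfies `δ(ε)/ε → 0` and `liminf_{ε→0} ε^{-γ} δ(ε) > 0`,
then for every `c > 0` and `M ≥ 1`, almost surely, for all sufficiently small `ε > 0` there
is a point `S ∈ [-c, c]` with `[S - Mε, S + Mε] ⊆ [-c, c]` on which the blown-up stripe field
`θ^stripe(δ(ε)⁻¹ ·)` is identically `1`. -/
theorem random_stripes {Ω : Type*} [MeasurableSpace Ω] (μ : Measure Ω) [IsProbabilityMeasure μ]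
    (γ β α : ℝ) (hγ : 1 < γ) (hβ : β = (γ - 1)⁻¹) (hα0 : 0 < α) (hαβ : α < β)
    (X : ℤ → Ω → ℤ) (hXm : ∀ m, Measurable (X m))
    (hindep : iIndepFun X μ)
    (hident : ∀ m : ℤ, IdentDistrib (X m) (X 0) μ μ)
    (hlaw : ∀ k : ℤ, k ≠ 0 →
      μ {ω | X 0 ω = k} = ENNReal.ofReal ((Zalpha α)⁻¹ * |(k : ℝ)| ^ (-(2 + α))))
    (hlaw0 : μ {ω | X 0 ω = 0} = 0)
    (δ : ℝ → ℝ) (hδpos : ∀ ε > (0 : ℝ), 0 < δ ε)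
    (hδsmall : Tendsto (fun ε => δ ε / ε) (𝓝[>] (0 : ℝ)) (𝓝 0))
    (hδlow : ∃ c₀ > (0 : ℝ), ∀ᶠ ε in 𝓝[>] (0 : ℝ), c₀ ≤ ε ^ (-γ) * δ ε)
    (c : ℝ) (hc : 0 < c) (M : ℝ) (hM : 1 ≤ M) :
    ∀ᵐ ω ∂μ, ∃ ε₀ > (0 : ℝ), ∀ ε : ℝ, 0 < ε → ε < ε₀ →
      ∃ S : ℝ, S ∈ Set.Icc (-c) c ∧
        Set.Icc (S - M * ε) (S + M * ε) ⊆ Set.Icc (-c) c ∧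
        ∀ s ∈ Set.Icc (S - M * ε) (S + M * ε), thetaStripe X ((δ ε)⁻¹ * s) ω = 1 :=
  random_stripes_general μ γ β α hγ hβ hα0 hαβ X hXm hindep hident hlaw δ hδpos hδsmall hδlow c hc M
    hM
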